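/- arXiv:0905.1994 — 2 statements merged into one kernel-verified Lean document; each statement's English description precedes it below -/
import Mathlib

section
/- Let θ>0, n≥1, z,z'∈ℂ with (zz'/θ)_n≠0, and let λ be a partition of n. Then M^{(n)}_{z,z',θ}(λ)=M^{(n)}_{−z/θ,−z'/θ,1/θ}(λ'), where λ' is the transposed diagram (note that (−z/θ)(−z'/θ)/(1/θ)=zz'/θ, so both sides have the same Pochhammer denominator). -/
open scoped BigOperators
open Polynomial

/-- The multidimensional Pochhammer symbol `(z)_{λ,θ}`. -/
noncomputable def pochP (z : ℂ) (θ : ℝ) (l : YoungDiagram) : ℂ :=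
  ∏ c ∈ l.cells, (z + (c.2 : ℂ) - (c.1 : ℂ) * (θ : ℂ))

/-- `H(λ,θ)`. -/
noncomputable def Hfun (l : YoungDiagram) (θ : ℝ) : ℝ :=
  ∏ c ∈ l.cells,
    ((l.rowLen c.1 : ℝ) - ((c.2 : ℝ) + 1) + ((l.colLen c.2 : ℝ) - ((c.1 : ℝ) + 1)) * θ + 1)

/-- `H'(λ,θ)`. -/
noncomputable def Hfun' (l : YoungDiagram) (θ : ℝ) : ℝ :=
  ∏ c ∈ l.cells,
    ((l.rowLen c.1 : ℝ) - ((c.2 : ℝ) + 1) + ((l.colLen c.2 : ℝ) - ((c.1 : ℝ) + 1)) * θ + θ)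

/-- The z-measure `M^{(n)}_{z,z',θ}(λ) = n!(z)_{λ,θ}(z')_{λ,θ} / ((t)_n H(λ,θ) H'(λ,θ))`,
`t = zz'/θ`. -/
noncomputable def zMeasureN (n : ℕ) (z z' : ℂ) (θ : ℝ) (l : YoungDiagram) : ℂ :=
  (Nat.factorial n : ℂ) * pochP z θ l * pochP z' θ l /
    ((ascPochhammer ℂ n).eval (z * z' / (θ : ℂ)) * (Hfun l θ : ℂ) * (Hfun' l θ : ℂ))

/-!
Transposing `λ` swaps arm and leg lengths and the row and column indices of each cell, so
after the substitution `(z, θ) ↦ (-z/θ, 1/θ)` every factor of `(z)_{λ,θ}` reappears in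
`(-z/θ)_{λ',1/θ}` multiplied by `-1/θ`, while `H(λ',1/θ)` and `H'(λ',1/θ)` are `H'(λ,θ)` and
`H(λ,θ)` with every factor multiplied by `1/θ`. The scalings of numerator and denominator are
both `θ^{-2|λ|}`, and the parameter `t = zz'/θ` is unchanged.
-/

namespace YoungDiagram

theorem prod_transpose_cells {M : Type*} [CommMonoid M] (l : YoungDiagram) (f : ℕ × ℕ → M) :
    ∏ c ∈ l.transpose.cells, f c = ∏ c ∈ l.cells, f c.swap :=
  Finset.prod_map l.cells (Equiv.prodComm ℕ ℕ).toEmbedding f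

end YoungDiagram

section Transpose

open YoungDiagram

variable {θ : ℝ} (hθ : θ ≠ 0) (l : YoungDiagram)
include hθ

theorem pochP_transpose (z : ℂ) :
    pochP (-z / θ) (1 / θ) l.transpose = (-(θ : ℂ)⁻¹) ^ l.cells.card * pochP z θ l := by
  have hθ' : (θ : ℂ) ≠ 0 := Complex.ofReal_ne_zero.mpr hθ
  rw [pochP, pochP, l.prod_transpose_cells, ← Finset.prod_const, ← Finset.prod_mul_distrib]
  refine Finset.prod_congr rfl fun c _ => ?_
  simp only [Prod.fst_swap, Prod.snd_swap, Complex.ofReal_div, Complex.ofReal_one]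
  field_simp
  ring

theorem Hfun_transpose : Hfun l.transpose (1 / θ) = (1 / θ) ^ l.cells.card * Hfun' l θ := by
  rw [Hfun, Hfun', l.prod_transpose_cells, ← Finset.prod_const, ← Finset.prod_mul_distrib]
  refine Finset.prod_congr rfl fun c _ => ?_
  simp only [Prod.fst_swap, Prod.snd_swap, rowLen_transpose, colLen_transpose]
  field_simp
  ring

theorem Hfun'_transpose : Hfun' l.transpose (1 / θ) = (1 / θ) ^ l.cells.card * Hfun l θ := by
  rw [Hfun, Hfun', l.prod_transpose_cells, ← Finset.prod_const, ← Finset.prod_mul_distrib]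
  refine Finset.prod_congr rfl fun c _ => ?_
  simp only [Prod.fst_swap, Prod.snd_swap, rowLen_transpose, colLen_transpose]
  field_simp
  ring

end Transpose

theorem zMeasureN_transpose_symmetry_general (θ : ℝ) (hθ : 0 < θ) (n : ℕ) (z z' : ℂ)
    (l : YoungDiagram) :
    zMeasureN n z z' θ l = zMeasureN n (-z / (θ : ℂ)) (-z' / (θ : ℂ)) (1 / θ) l.transpose := by
  have hθ' : (θ : ℂ) ≠ 0 := Complex.ofReal_ne_zero.mpr hθ.ne'
  have ht : -z / (θ : ℂ) * (-z' / θ) / ((1 / θ : ℝ) : ℂ) = z * z' / θ := by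
    push_cast
    field_simp
  have hsign : (-(θ : ℂ)⁻¹) ^ l.cells.card * (-(θ : ℂ)⁻¹) ^ l.cells.card
      = (θ : ℂ)⁻¹ ^ l.cells.card * (θ : ℂ)⁻¹ ^ l.cells.card := by
    rw [← mul_pow, ← mul_pow, neg_mul_neg]
  have hscale : (θ : ℂ)⁻¹ ^ l.cells.card * (θ : ℂ)⁻¹ ^ l.cells.card ≠ 0 := by simp [hθ']
  unfold zMeasureN
  rw [pochP_transpose hθ.ne', pochP_transpose hθ.ne', Hfun_transpose hθ.ne',
    Hfun'_transpose hθ.ne', ht, ← mul_div_mul_left _ _ hscale]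
  congr 1
  · rw [← hsign]
    ring
  · push_cast
    ring

/-- `M^{(n)}_{z,z',θ}(λ) = M^{(n)}_{-z/θ,-z'/θ,1/θ}(λ')`. -/
theorem zMeasureN_transpose_symmetry (θ : ℝ) (hθ : 0 < θ) (n : ℕ) (hn : 1 ≤ n) (z z' : ℂ)
    (hpoch : (ascPochhammer ℂ n).eval (z * z' / (θ : ℂ)) ≠ 0)
    (l : YoungDiagram) (hl : l.cells.card = n) :
    zMeasureN n z z' θ l = zMeasureN n (-z / (θ : ℂ)) (-z' / (θ : ℂ)) (1 / θ) l.transpose :=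
  zMeasureN_transpose_symmetry_general θ hθ n z z' l
end

section
/- Fix θ>0 and n≥1. Suppose the pair (z,z') satisfies one of the following: (principal series) z∈ℂ∖(ℤ_{≤0}+ℤ_{≥0}θ) and z'=conj(z); (complementary series) θ is rational and z,z' are real numbers lying in the same open interval between two consecutive points of the lattice ℤ+ℤθ; (degenerate series) for some positive integer m, either (z=mθ and z'>(m−1)θ) or (z'=mθ and z>(m−1)θ) or (z=−m and z'<−m+1) or (z'=−m and z<−m+1). Then M^{(n)}_{z,z',θ}(λ)≥0 for every partition λ of n, i.e. M^{(n)}_{z,z',θ} is a probability measure on the set of partitions of n. -/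
open scoped BigOperators
open Polynomial

/-!
Since `H` and `H'` are positive for `θ > 0`, it suffices that `(z)_{λ,θ}(z')_{λ,θ} ≥ 0` and
`zz' > 0`, which makes `(zz'/θ)_n > 0`. In the principal series the two symbols are complex
conjugates. In the complementary series each factor `z + (j-1) - (i-1)θ` is `z` minus a lattice
point, and `z`, `z'` lie on the same side of every lattice point. In the degenerate series either
`λ` contains the box where `(mθ)_{λ,θ}` (resp. `(-m)_{λ,θ}`) vanishes, or `λ` fits in `m` rows
(resp. columns) and all factors of both symbols have the same sign.
-/

open ComplexOrder

namespace YoungDiagram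

lemma hook_factor_pos {l : YoungDiagram} {θ t : ℝ} (hθ : 0 ≤ θ) (ht : 0 < t) {c : ℕ × ℕ}
    (hc : c ∈ l.cells) :
    0 < (l.rowLen c.1 : ℝ) - ((c.2 : ℝ) + 1) + ((l.colLen c.2 : ℝ) - ((c.1 : ℝ) + 1)) * θ + t := by
  rw [mem_cells] at hc
  have harm : (c.2 : ℝ) + 1 ≤ l.rowLen c.1 := by exact_mod_cast mem_iff_lt_rowLen.mp hc
  have hleg : (c.1 : ℝ) + 1 ≤ l.colLen c.2 := by exact_mod_cast mem_iff_lt_colLen.mp hc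
  nlinarith

end YoungDiagram

lemma Hfun_pos (l : YoungDiagram) {θ : ℝ} (hθ : 0 ≤ θ) : 0 < Hfun l θ :=
  Finset.prod_pos fun _ hc => l.hook_factor_pos hθ one_pos hc

lemma Hfun'_pos (l : YoungDiagram) {θ : ℝ} (hθ : 0 < θ) : 0 < Hfun' l θ :=
  Finset.prod_pos fun _ hc => l.hook_factor_pos hθ.le hθ hc

lemma zMeasureN_comm (n : ℕ) (z z' : ℂ) (θ : ℝ) (l : YoungDiagram) :
    zMeasureN n z z' θ l = zMeasureN n z' z θ l := by
  rw [zMeasureN, zMeasureN, mul_comm z z', mul_right_comm (n.factorial : ℂ)]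

lemma zMeasureN_nonneg_of_pochP_mul_nonneg (n : ℕ) {z z' : ℂ} {θ : ℝ} {l : YoungDiagram}
    (hθ : 0 < θ) (hP : 0 ≤ pochP z θ l * pochP z' θ l) (hzz' : 0 < z * z') :
    0 ≤ zMeasureN n z z' θ l := by
  have hasc : 0 < (ascPochhammer ℂ n).eval (z * z' / (θ : ℂ)) :=
    ascPochhammer_pos n _ (div_pos hzz' (Complex.zero_lt_real.mpr hθ))
  have hH : 0 ≤ (Hfun l θ : ℂ) := Complex.zero_le_real.mpr (Hfun_pos l hθ.le).le
  have hH' : 0 ≤ (Hfun' l θ : ℂ) := Complex.zero_le_real.mpr (Hfun'_pos l hθ).le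
  rw [zMeasureN, mul_assoc]
  exact div_nonneg (mul_nonneg (Nat.cast_nonneg _) hP) (mul_nonneg (mul_nonneg hasc.le hH) hH')

lemma pochP_conj (z : ℂ) (θ : ℝ) (l : YoungDiagram) :
    pochP ((starRingEnd ℂ) z) θ l = (starRingEnd ℂ) (pochP z θ l) := by
  simp [pochP, map_prod]

lemma pochP_ofReal (x θ : ℝ) (l : YoungDiagram) :
    pochP (x : ℂ) θ l = ((∏ c ∈ l.cells, (x + (c.2 : ℝ) - (c.1 : ℝ) * θ) : ℝ) : ℂ) := by
  simp [pochP]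

lemma pochP_ofReal_mul_nonneg {x x' θ : ℝ} {l : YoungDiagram}
    (h : ∀ c ∈ l.cells,
      0 ≤ (x + (c.2 : ℝ) - (c.1 : ℝ) * θ) * (x' + (c.2 : ℝ) - (c.1 : ℝ) * θ)) :
    0 ≤ pochP (x : ℂ) θ l * pochP (x' : ℂ) θ l := by
  rw [pochP_ofReal, pochP_ofReal, ← Complex.ofReal_mul, Complex.zero_le_real,
    ← Finset.prod_mul_distrib]
  exact Finset.prod_nonneg h

lemma zMeasureN_conj_nonneg (n : ℕ) {z : ℂ} {θ : ℝ} (hθ : 0 < θ) (hz : z ≠ 0)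
    (l : YoungDiagram) : 0 ≤ zMeasureN n z ((starRingEnd ℂ) z) θ l := by
  refine zMeasureN_nonneg_of_pochP_mul_nonneg n hθ ?_ (mul_star_self_pos (IsRegular.of_ne_zero hz))
  rw [pochP_conj]
  exact mul_star_self_nonneg _

lemma sub_mul_sub_pos_of_not_between {u v w x x' : ℝ} (hw : ¬(u < w ∧ w < v))
    (hx : u < x ∧ x < v) (hx' : u < x' ∧ x' < v) : 0 < (x - w) * (x' - w) := by
  rcases le_or_gt w u with hwu | hwu
  · exact mul_pos (by linarith) (by linarith)
  · have hvw : v ≤ w := not_lt.mp fun h => hw ⟨hwu, h⟩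
    exact mul_pos_of_neg_of_neg (by linarith) (by linarith)

lemma zMeasureN_nonneg_of_mem_lattice_gap (n : ℕ) {θ u v x x' : ℝ} (hθ : 0 < θ)
    (hgap : ∀ w : ℝ, (∃ a b : ℤ, w = (a : ℝ) + (b : ℝ) * θ) → ¬(u < w ∧ w < v))
    (hx : u < x ∧ x < v) (hx' : u < x' ∧ x' < v) (l : YoungDiagram) :
    0 ≤ zMeasureN n (x : ℂ) (x' : ℂ) θ l := by
  refine zMeasureN_nonneg_of_pochP_mul_nonneg n hθ (pochP_ofReal_mul_nonneg fun c _ => ?_) ?_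
  · have hcell := sub_mul_sub_pos_of_not_between
      (hgap ((c.1 : ℝ) * θ - c.2) ⟨-(c.2 : ℤ), c.1, by push_cast; ring⟩) hx hx'
    linarith
  · have h0 := sub_mul_sub_pos_of_not_between (hgap 0 ⟨0, 0, by simp⟩) hx hx'
    rw [← Complex.ofReal_mul, Complex.zero_lt_real]
    simpa using h0

lemma zMeasureN_nat_mul_nonneg (n : ℕ) {θ r : ℝ} (hθ : 0 < θ) {m : ℕ} (hm : 0 < m)
    (hr : ((m : ℝ) - 1) * θ < r) (l : YoungDiagram) :
    0 ≤ zMeasureN n ((m : ℂ) * (θ : ℂ)) (r : ℂ) θ l := by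
  have hm1 : (1 : ℝ) ≤ m := by exact_mod_cast hm
  have hz : (m : ℂ) * (θ : ℂ) = (((m : ℝ) * θ : ℝ) : ℂ) := by push_cast; ring
  rw [hz]
  refine zMeasureN_nonneg_of_pochP_mul_nonneg n hθ ?_ ?_
  · by_cases hcell : (m, 0) ∈ l
    · rw [pochP, Finset.prod_eq_zero ((YoungDiagram.mem_cells _).mpr hcell) (by push_cast; ring),
        zero_mul]
    · refine pochP_ofReal_mul_nonneg fun c hc => ?_
      have hrow : (c.1 : ℝ) + 1 ≤ m := by
        have : c.1 < m := not_le.mp fun h => hcell (l.up_left_mem h (Nat.zero_le _) hc)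
        exact_mod_cast this
      have hcol : (0 : ℝ) ≤ c.2 := Nat.cast_nonneg _
      exact (mul_pos (by nlinarith) (by nlinarith)).le
  · rw [← Complex.ofReal_mul, Complex.zero_lt_real]
    exact mul_pos (by positivity) (by nlinarith)

lemma zMeasureN_neg_nat_nonneg (n : ℕ) {θ r : ℝ} (hθ : 0 < θ) {m : ℕ} (hm : 0 < m)
    (hr : r < -(m : ℝ) + 1) (l : YoungDiagram) :
    0 ≤ zMeasureN n (-(m : ℂ)) (r : ℂ) θ l := by
  have hm1 : (1 : ℝ) ≤ m := by exact_mod_cast hm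
  have hz : -(m : ℂ) = ((-(m : ℝ) : ℝ) : ℂ) := by push_cast; ring
  rw [hz]
  refine zMeasureN_nonneg_of_pochP_mul_nonneg n hθ ?_ ?_
  · by_cases hcell : (0, m) ∈ l
    · rw [pochP, Finset.prod_eq_zero ((YoungDiagram.mem_cells _).mpr hcell) (by push_cast; ring),
        zero_mul]
    · refine pochP_ofReal_mul_nonneg fun c hc => ?_
      have hcol : (c.2 : ℝ) + 1 ≤ m := by
        have : c.2 < m := not_le.mp fun h => hcell (l.up_left_mem (Nat.zero_le _) h hc)
        exact_mod_cast this
      have hrow : (0 : ℝ) ≤ c.1 := Nat.cast_nonneg _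
      exact (mul_pos_of_neg_of_neg (by nlinarith) (by nlinarith)).le
  · rw [← Complex.ofReal_mul, Complex.zero_lt_real]
    exact mul_pos_of_neg_of_neg (by linarith) (by linarith)

theorem zMeasureN_nonneg_general (θ : ℝ) (hθ : 0 < θ) (n : ℕ) (z z' : ℂ)
    (h :
      -- principal series: `z ∉ ℤ_{≤0} + ℤ_{≥0}θ` and `z' = conj z`
      ((¬ ∃ a b : ℕ, z = -(a : ℂ) + (b : ℂ) * (θ : ℂ)) ∧ z' = (starRingEnd ℂ) z) ∨
      -- complementary series: `θ` rational, `z, z'` real and in the same open interval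
      -- between two consecutive points of the lattice `ℤ + ℤθ`
      ((∃ q : ℚ, (q : ℝ) = θ) ∧ ∃ x x' u v : ℝ,
        z = (x : ℂ) ∧ z' = (x' : ℂ) ∧
        (∃ a b : ℤ, u = (a : ℝ) + (b : ℝ) * θ) ∧
        (∃ a b : ℤ, v = (a : ℝ) + (b : ℝ) * θ) ∧ u < v ∧
        (∀ w : ℝ, (∃ a b : ℤ, w = (a : ℝ) + (b : ℝ) * θ) → ¬(u < w ∧ w < v)) ∧
        u < x ∧ x < v ∧ u < x' ∧ x' < v) ∨
      -- degenerate series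
      (∃ m : ℕ, 0 < m ∧
        ((z = (m : ℂ) * (θ : ℂ) ∧ ∃ r : ℝ, z' = (r : ℂ) ∧ ((m : ℝ) - 1) * θ < r) ∨
         (z' = (m : ℂ) * (θ : ℂ) ∧ ∃ r : ℝ, z = (r : ℂ) ∧ ((m : ℝ) - 1) * θ < r) ∨
         (z = -(m : ℂ) ∧ ∃ r : ℝ, z' = (r : ℂ) ∧ r < -(m : ℝ) + 1) ∨
         (z' = -(m : ℂ) ∧ ∃ r : ℝ, z = (r : ℂ) ∧ r < -(m : ℝ) + 1))))
    (l : YoungDiagram) :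
    (zMeasureN n z z' θ l).im = 0 ∧ 0 ≤ (zMeasureN n z z' θ l).re := by
  suffices hM : 0 ≤ zMeasureN n z z' θ l by
    obtain ⟨hre, him⟩ := Complex.nonneg_iff.mp hM
    exact ⟨him.symm, hre⟩
  rcases h with ⟨hz, rfl⟩ | ⟨-, x, x', u, v, rfl, rfl, -, -, -, hgap, hux, hxv, hux', hx'v⟩ |
      ⟨m, hm, hcase⟩
  · have hz0 : z ≠ 0 := by
      rintro rfl
      exact hz ⟨0, 0, by simp⟩
    exact zMeasureN_conj_nonneg n hθ hz0 l
  · exact zMeasureN_nonneg_of_mem_lattice_gap n hθ hgap ⟨hux, hxv⟩ ⟨hux', hx'v⟩ l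
  · rcases hcase with ⟨rfl, r, rfl, hr⟩ | ⟨rfl, r, rfl, hr⟩ | ⟨rfl, r, rfl, hr⟩ |
        ⟨rfl, r, rfl, hr⟩
    · exact zMeasureN_nat_mul_nonneg n hθ hm hr l
    · exact zMeasureN_comm n _ _ θ l ▸ zMeasureN_nat_mul_nonneg n hθ hm hr l
    · exact zMeasureN_neg_nat_nonneg n hθ hm hr l
    · exact zMeasureN_comm n _ _ θ l ▸ zMeasureN_neg_nat_nonneg n hθ hm hr l

/-- If `(z,z')` belongs to the principal, complementary, or degenerate series, then
`M^{(n)}_{z,z',θ}(λ)` is a nonnegative real number for every partition `λ` of `n`;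
i.e. `M^{(n)}_{z,z',θ}` is a probability measure on partitions of `n`. -/
theorem zMeasureN_nonneg (θ : ℝ) (hθ : 0 < θ) (n : ℕ) (hn : 1 ≤ n) (z z' : ℂ)
    (h :
      -- principal series: `z ∉ ℤ_{≤0} + ℤ_{≥0}θ` and `z' = conj z`
      ((¬ ∃ a b : ℕ, z = -(a : ℂ) + (b : ℂ) * (θ : ℂ)) ∧ z' = (starRingEnd ℂ) z) ∨
      -- complementary series: `θ` rational, `z, z'` real and in the same open interval
      -- between two consecutive points of the lattice `ℤ + ℤθ`
      ((∃ q : ℚ, (q : ℝ) = θ) ∧ ∃ x x' u v : ℝ,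
        z = (x : ℂ) ∧ z' = (x' : ℂ) ∧
        (∃ a b : ℤ, u = (a : ℝ) + (b : ℝ) * θ) ∧
        (∃ a b : ℤ, v = (a : ℝ) + (b : ℝ) * θ) ∧ u < v ∧
        (∀ w : ℝ, (∃ a b : ℤ, w = (a : ℝ) + (b : ℝ) * θ) → ¬(u < w ∧ w < v)) ∧
        u < x ∧ x < v ∧ u < x' ∧ x' < v) ∨
      -- degenerate series
      (∃ m : ℕ, 0 < m ∧
        ((z = (m : ℂ) * (θ : ℂ) ∧ ∃ r : ℝ, z' = (r : ℂ) ∧ ((m : ℝ) - 1) * θ < r) ∨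
         (z' = (m : ℂ) * (θ : ℂ) ∧ ∃ r : ℝ, z = (r : ℂ) ∧ ((m : ℝ) - 1) * θ < r) ∨
         (z = -(m : ℂ) ∧ ∃ r : ℝ, z' = (r : ℂ) ∧ r < -(m : ℝ) + 1) ∨
         (z' = -(m : ℂ) ∧ ∃ r : ℝ, z = (r : ℂ) ∧ r < -(m : ℝ) + 1))))
    (l : YoungDiagram) (hl : l.cells.card = n) :
    (zMeasureN n z z' θ l).im = 0 ∧ 0 ≤ (zMeasureN n z z' θ l).re :=
  zMeasureN_nonneg_general θ hθ n z z' h l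
end
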